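/- Let α ∈ R and σ, δ ∈ V⁰ with α+σ, α+δ, α+σ+δ ∈ R. Then t̂_{α+σ}^{−δ} · t̂_α^{δ} = t̂_{α+δ}^{σ} · t̂_α^{−σ} in Ŵ. -/
import Mathlib

/-- The reflection `s_α(u) = u - (u, α^∨) α` associated to a vector `α`, where
`α^∨ = 2α/(α,α)` and `B` is the bilinear form. -/
noncomputable def reflMap {V : Type*} [AddCommGroup V] [Module ℝ V] (B : V →ₗ[ℝ] V →ₗ[ℝ] ℝ)
    (α : V) : V → V :=
  fun u => u - ((2 * B u α) / B α α) • α

/-- The defining relations of the presented group `Ŵ`: (I) `ŵ_α² = 1` and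
(II) `ŵ_α ŵ_β ŵ_α = ŵ_{s_α(β)}` for `α, β ∈ R`. -/
def eawRels {V : Type*} [AddCommGroup V] [Module ℝ V] (B : V →ₗ[ℝ] V →ₗ[ℝ] ℝ)
    (R : Set V) : Set (FreeGroup R) :=
  {r | ∃ α : R, r = FreeGroup.of α * FreeGroup.of α} ∪
  {r | ∃ α β γ : R, (γ : V) = reflMap B (α : V) (β : V) ∧
        r = FreeGroup.of α * FreeGroup.of β * FreeGroup.of α * (FreeGroup.of γ)⁻¹}

/-- The group `Ŵ` presented by generators `ŵ_α` (`α ∈ R`) and relations (I), (II). -/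
abbrev EAW {V : Type*} [AddCommGroup V] [Module ℝ V] (B : V →ₗ[ℝ] V →ₗ[ℝ] ℝ)
    (R : Set V) :=
  PresentedGroup (eawRels B R)

/-- The generator `ŵ_α` of `Ŵ`. -/
def wgen {V : Type*} [AddCommGroup V] [Module ℝ V] (B : V →ₗ[ℝ] V →ₗ[ℝ] ℝ)
    (R : Set V) (α : V) (hα : α ∈ R) : EAW B R :=
  PresentedGroup.of (⟨α, hα⟩ : R)

/-- The element `t̂_α^σ = ŵ_{α+σ} ŵ_α` of `Ŵ`. -/
def tgen {V : Type*} [AddCommGroup V] [Module ℝ V] (B : V →ₗ[ℝ] V →ₗ[ℝ] ℝ)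
    (R : Set V) (α σ : V) (hα : α ∈ R) (hασ : α + σ ∈ R) : EAW B R :=
  wgen B R (α + σ) hασ * wgen B R α hα

section AuxLemmas

variable {V : Type*} [AddCommGroup V] [Module ℝ V] (B : V →ₗ[ℝ] V →ₗ[ℝ] ℝ) (R : Set V)

lemma eaw_rel_one {γ : Type*} {rels : Set (FreeGroup γ)} {r : FreeGroup γ} (h : r ∈ rels) :
    PresentedGroup.mk rels r = 1 :=
  (QuotientGroup.eq_one_iff r).mpr (Subgroup.subset_normalClosure h)

lemma wgen_sq (β : V) (hβ : β ∈ R) : wgen B R β hβ * wgen B R β hβ = 1 := by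
  have h := eaw_rel_one (rels := eawRels B R) (Or.inl ⟨⟨β, hβ⟩, rfl⟩ : _ ∈ eawRels B R)
  rwa [map_mul] at h

lemma wgen_cancel (β : V) (hβ : β ∈ R) (g : EAW B R) :
    wgen B R β hβ * (wgen B R β hβ * g) = g := by
  rw [← mul_assoc, wgen_sq, one_mul]

lemma wgen_braid (β γ γ' : V) (hβ : β ∈ R) (hγ : γ ∈ R) (hγ' : γ' ∈ R)
    (h : γ' = reflMap B β γ) :
    wgen B R β hβ * wgen B R γ hγ * wgen B R β hβ = wgen B R γ' hγ' := by
  have hr := eaw_rel_one (rels := eawRels B R) (Or.inr ⟨⟨β, hβ⟩, ⟨γ, hγ⟩, ⟨γ', hγ'⟩, h, rfl⟩ : _ ∈ eawRels B R)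
  rw [map_mul, map_mul, map_mul, map_inv, mul_inv_eq_one] at hr
  exact hr

lemma reflMap_self (β : V) (hne : B β β ≠ 0) : reflMap B β β = -β := by
  unfold reflMap
  rw [mul_div_assoc, div_self hne, mul_one, two_smul]
  abel

lemma memR_neg (hnon : ∀ α ∈ R, B α α ≠ 0) (hclos : ∀ α ∈ R, ∀ β ∈ R, reflMap B α β ∈ R)
    (β : V) (hβ : β ∈ R) : -β ∈ R := by
  have h := hclos β hβ β hβ
  rwa [reflMap_self B β (hnon β hβ)] at h

lemma wgen_neg (β : V) (hβ : β ∈ R) (hβ' : -β ∈ R) (hne : B β β ≠ 0) :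
    wgen B R (-β) hβ' = wgen B R β hβ := by
  have h := wgen_braid B R β β (-β) hβ hβ hβ' (reflMap_self B β hne).symm
  rw [wgen_sq, one_mul] at h; exact h.symm

lemma wgen_congr {x y : V} (hxy : x = y) (hx : x ∈ R) (hy : y ∈ R) :
    wgen B R x hx = wgen B R y hy := by subst hxy; rfl

lemma wgen_dih (hnon : ∀ α ∈ R, B α α ≠ 0) (hclos : ∀ α ∈ R, ∀ β ∈ R, reflMap B α β ∈ R)
    (β γ ζ : V) (hβ : β ∈ R) (hγ : γ ∈ R)
    (hB : B γ β = B β β) (hζ : ζ = (2 : ℝ) • β - γ) :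
    ∃ hζR : ζ ∈ R, wgen B R β hβ * wgen B R γ hγ * wgen B R β hβ = wgen B R ζ hζR := by
  have hne := hnon β hβ
  have hrefl : reflMap B β γ = -ζ := by
    rw [hζ]
    unfold reflMap
    rw [hB, mul_div_assoc, div_self hne, mul_one, neg_sub]
  have hnegζ : -ζ ∈ R := hrefl ▸ hclos β hβ γ hγ
  have hζR : ζ ∈ R := by
    have h := memR_neg B R hnon hclos _ hnegζ
    rwa [neg_neg] at h
  refine ⟨hζR, ?_⟩
  rw [wgen_braid B R β γ (-ζ) hβ hγ hnegζ hrefl.symm,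
    wgen_neg B R ζ hζR hnegζ (hnon ζ hζR)]

end AuxLemmas

/-- For `α ∈ R` and `σ, δ` in the radical with `α+σ, α+δ, α+σ+δ ∈ R`:
`t̂_{α+σ}^{−δ} · t̂_α^{δ} = t̂_{α+δ}^{σ} · t̂_α^{−σ}` in `Ŵ`. -/
theorem tgen_exchange {V : Type*} [AddCommGroup V] [Module ℝ V]
    (B : V →ₗ[ℝ] V →ₗ[ℝ] ℝ) (R : Set V)
    (hsym : ∀ u v : V, B u v = B v u)
    (hpsd : ∀ v : V, 0 ≤ B v v)
    (hnon : ∀ α ∈ R, B α α ≠ 0)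
    (hclos : ∀ α ∈ R, ∀ β ∈ R, reflMap B α β ∈ R)
    (α σ δ : V) (hα : α ∈ R)
    (hσ : ∀ u : V, B σ u = 0) (hδ : ∀ u : V, B δ u = 0)
    (hασ : α + σ ∈ R) (hαδ : α + δ ∈ R) (hασδ : α + σ + δ ∈ R) :
    ∃ (h1 : α + σ + -δ ∈ R) (h2 : α + δ + σ ∈ R) (h3 : α + -σ ∈ R),
      tgen B R (α + σ) (-δ) hασ h1 * tgen B R α δ hα hαδ =
        tgen B R (α + δ) σ hαδ h2 * tgen B R α (-σ) hα h3 := by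
  have hσ' : ∀ u : V, B u σ = 0 := fun u => (hsym u σ).trans (hσ u)
  have hδ' : ∀ u : V, B u δ = 0 := fun u => (hsym u δ).trans (hδ u)
  -- D6 : membership of α+σ-δ
  obtain ⟨hm1, hd6⟩ := wgen_dih B R hnon hclos (α + σ) (α + σ + δ) (α + σ + -δ) hασ hασδ
    (by simp [map_add, map_neg, hσ, hδ, hσ', hδ']) (by module)
  -- D5 : membership of α-σ
  obtain ⟨hm3, hd5⟩ := wgen_dih B R hnon hclos α (α + σ) (α + -σ) hα hασ
    (by simp [map_add, map_neg, hσ, hδ, hσ', hδ']) (by module)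
  -- D4 : w_{α+δ} w_{α-σ} w_{α+δ} = w_{α+σ+2δ}
  obtain ⟨hm4, hd4⟩ := wgen_dih B R hnon hclos (α + δ) (α + -σ) (α + σ + δ + δ) hαδ hm3
    (by simp [map_add, map_neg, hσ, hδ, hσ', hδ']) (by module)
  -- D3 : w_{α+σ} w_{α+σ+2δ} w_{α+σ} = w_{α+σ-2δ}
  obtain ⟨hm5, hd3⟩ := wgen_dih B R hnon hclos (α + σ) (α + σ + δ + δ) (α + σ + -δ + -δ) hασ hm4
    (by simp [map_add, map_neg, hσ, hδ, hσ', hδ']) (by module)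
  -- D2 : w_{α+σ-δ} w_{α+σ-2δ} w_{α+σ-δ} = w_{α+σ}
  obtain ⟨hm6, hd2⟩ := wgen_dih B R hnon hclos (α + σ + -δ) (α + σ + -δ + -δ) (α + σ) hm1 hm5
    (by simp [map_add, map_neg, hσ, hδ, hσ', hδ']) (by module)
  -- D1 : w_{α+σ} w_{α+σ-δ} w_{α+σ} = w_{α+σ+δ}
  obtain ⟨hm7, hd1⟩ := wgen_dih B R hnon hclos (α + σ) (α + σ + -δ) (α + σ + δ) hασ hm1
    (by simp [map_add, map_neg, hσ, hδ, hσ', hδ']) (by module)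
  have hd2' : wgen B R (α + σ + -δ) hm1 * wgen B R (α + σ + -δ + -δ) hm5 *
      wgen B R (α + σ + -δ) hm1 = wgen B R (α + σ) hασ := hd2
  have hm2 : α + δ + σ ∈ R := by
    rw [show α + δ + σ = α + σ + δ from by abel]; exact hασδ
  -- key identity E : w_{α+σ-δ} w_{α+σ} w_{α+σ+2δ} = w_{α+σ+δ}
  have e3 : wgen B R (α + σ) hασ * wgen B R (α + σ + δ + δ) hm4 =
      wgen B R (α + σ + -δ + -δ) hm5 * wgen B R (α + σ) hασ := by
    rw [← hd3, mul_assoc, wgen_sq, mul_one]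
  have e2 : wgen B R (α + σ + -δ) hm1 * wgen B R (α + σ + -δ + -δ) hm5 =
      wgen B R (α + σ) hασ * wgen B R (α + σ + -δ) hm1 := by
    rw [← hd2', mul_assoc, wgen_sq, mul_one]
  have hE : wgen B R (α + σ + -δ) hm1 * wgen B R (α + σ) hασ *
      wgen B R (α + σ + δ + δ) hm4 = wgen B R (α + σ + δ) hm7 := by
    rw [mul_assoc, e3, ← mul_assoc, e2, hd1]
  refine ⟨hm1, hm2, hm3, ?_⟩
  unfold tgen
  rw [wgen_congr B R (show α + δ + σ = α + σ + δ from by abel) hm2 hm7, ← hE, ← hd4]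
  simp only [mul_assoc, wgen_cancel]
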